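/- Let Q = (1/√2)·[[1,0,0,i],[0,i,1,0],[0,i,−1,0],[1,0,0,−i]], and for a 4×4 complex matrix M with det M ≠ 0 define M_B = Q†MQ, m₁(M) = [tr(M_Bᵀ M_B)]² / (16 · det(M†)), and m₂(M) = ([tr(M_Bᵀ M_B)]² − tr((M_Bᵀ M_B)²)) / (4 · det(M†)). If M is a 4×4 unitary and L = (u₁ ⊗ u₂) M (v₁ ⊗ v₂) for some u₁, u₂, v₁, v₂ ∈ SU(2), then m₁(L) = m₁(M) and m₂(L) = m₂(M), and moreover L_Bᵀ L_B and M_Bᵀ M_B have the same characteristic polynomial (hence the same spectrum). In particular locally equivalent two-qubit gates have identical Makhlin invariants. -/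

import Mathlib

/-!
In the Bell basis, local gates `SU(2) ⊗ SU(2)` become complex orthogonal matrices: for
`u ∈ SL(2)` one has `uᵀ J u = J` with `J = !![0, 1; -1, 0]`, and the Bell basis is chosen so
that `conj Q · Qᴴ = J ⊗ J`. Hence `L_B = P M_B O` with `P, O` orthogonal, so that
`L_Bᵀ L_B = Oᵀ (M_Bᵀ M_B) O` is similar to `M_Bᵀ M_B`, while `det L = det M`.
-/

open Complex Matrix Kronecker

/-- The Bell (magic) basis change matrix `Q`. -/
noncomputable def Q : Matrix (Fin 4) (Fin 4) ℂ :=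
  (1 / (Real.sqrt 2 : ℂ)) •
    !![1, 0, 0, Complex.I;
       0, Complex.I, 1, 0;
       0, Complex.I, -1, 0;
       1, 0, 0, -Complex.I]

/-- The Kronecker product of two single-qubit operators, as a 4×4 matrix with the
basis ordering `|00⟩,|01⟩,|10⟩,|11⟩`. -/
noncomputable def kron2 (A B : Matrix (Fin 2) (Fin 2) ℂ) : Matrix (Fin 4) (Fin 4) ℂ :=
  Matrix.reindex finProdFinEquiv finProdFinEquiv (A ⊗ₖ B)

/-- A two-qubit gate expressed in the Bell basis: `M_B = Q† M Q`. -/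
noncomputable def bellB (M : Matrix (Fin 4) (Fin 4) ℂ) : Matrix (Fin 4) (Fin 4) ℂ :=
  Qᴴ * M * Q

/-- The first Makhlin invariant `m₁(M) = [tr(M_Bᵀ M_B)]² / (16 det M†)`. -/
noncomputable def makhlin₁ (M : Matrix (Fin 4) (Fin 4) ℂ) : ℂ :=
  (Matrix.trace ((bellB M)ᵀ * bellB M)) ^ 2 / (16 * (Mᴴ).det)

/-- The second Makhlin invariant
`m₂(M) = ([tr(M_Bᵀ M_B)]² − tr((M_Bᵀ M_B)²)) / (4 det M†)`. -/
noncomputable def makhlin₂ (M : Matrix (Fin 4) (Fin 4) ℂ) : ℂ :=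
  ((Matrix.trace ((bellB M)ᵀ * bellB M)) ^ 2 -
      Matrix.trace (((bellB M)ᵀ * bellB M) ^ 2)) / (4 * (Mᴴ).det)

section TransposeConj

variable {n R : Type*} [Fintype n] [DecidableEq n] [CommRing R] {O : Matrix n n R}

def unitOfTransposeMulSelf (hO : Oᵀ * O = 1) : (Matrix n n R)ˣ :=
  ⟨Oᵀ, O, hO, mul_eq_one_comm.mp hO⟩

lemma transpose_conj_pow (hO : Oᵀ * O = 1) (A : Matrix n n R) (k : ℕ) :
    (Oᵀ * A * O) ^ k = Oᵀ * A ^ k * O :=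
  Units.conj_pow (unitOfTransposeMulSelf hO) A k

lemma trace_transpose_conj (hO : Oᵀ * O = 1) (A : Matrix n n R) :
    trace (Oᵀ * A * O) = trace A :=
  trace_units_conj (unitOfTransposeMulSelf hO) A

lemma charpoly_transpose_conj (hO : Oᵀ * O = 1) (A : Matrix n n R) :
    (Oᵀ * A * O).charpoly = A.charpoly := by
  rw [charpoly_mul_comm, ← Matrix.mul_assoc, mul_eq_one_comm.mp hO, Matrix.one_mul]

end TransposeConj

def J₂ (R : Type*) [CommRing R] : Matrix (Fin 2) (Fin 2) R := !![0, 1; -1, 0]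

lemma transpose_mul_J₂_mul {R : Type*} [CommRing R] (A : Matrix (Fin 2) (Fin 2) R) :
    Aᵀ * J₂ R * A = A.det • J₂ R := by
  ext i j
  fin_cases i <;> fin_cases j <;> simp [J₂, det_fin_two, mul_apply, Fin.sum_univ_two] <;> ring

lemma kron2_mul (A B C D : Matrix (Fin 2) (Fin 2) ℂ) :
    kron2 A B * kron2 C D = kron2 (A * C) (B * D) := by
  rw [kron2, kron2, kron2, reindex_apply, reindex_apply, reindex_apply, submatrix_mul_equiv,
    mul_kronecker_mul]

lemma kron2_transpose (A B : Matrix (Fin 2) (Fin 2) ℂ) : (kron2 A B)ᵀ = kron2 Aᵀ Bᵀ := by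
  rw [kron2, kron2, reindex_apply, reindex_apply, transpose_submatrix, kroneckerMap_transpose]

lemma kron2_smul (a b : ℂ) (A B : Matrix (Fin 2) (Fin 2) ℂ) :
    kron2 (a • A) (b • B) = (a * b) • kron2 A B := by
  rw [kron2, kron2, reindex_apply, reindex_apply, smul_kronecker, kronecker_smul, smul_smul]
  rfl

lemma det_kron2 (A B : Matrix (Fin 2) (Fin 2) ℂ) : (kron2 A B).det = A.det ^ 2 * B.det ^ 2 := by
  rw [kron2, reindex_apply, det_submatrix_equiv_self, det_kronecker]
  simp only [Fintype.card_fin]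

lemma transpose_kron2_mul_kron2_J₂_mul {u v : Matrix (Fin 2) (Fin 2) ℂ} (hu : u.det = 1)
    (hv : v.det = 1) :
    (kron2 u v)ᵀ * kron2 (J₂ ℂ) (J₂ ℂ) * kron2 u v = kron2 (J₂ ℂ) (J₂ ℂ) := by
  rw [kron2_transpose, kron2_mul, kron2_mul, transpose_mul_J₂_mul, transpose_mul_J₂_mul, hu, hv,
    kron2_smul, one_mul, one_smul]

lemma Q_conjTranspose_mul_Q : Qᴴ * Q = 1 := by
  ext i j
  fin_cases i <;> fin_cases j <;>
    simp [Q, mul_apply, Fin.sum_univ_four, conjTranspose_apply, Complex.ext_iff,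
      div_mul_div_comm] <;>
    norm_num [Real.sq_sqrt]

lemma Q_mul_Q_conjTranspose : Q * Qᴴ = 1 := mul_eq_one_comm.mp Q_conjTranspose_mul_Q

lemma transpose_conjTranspose_Q_mul_conjTranspose_Q :
    Qᴴᵀ * Qᴴ = kron2 (J₂ ℂ) (J₂ ℂ) := by
  ext i j
  fin_cases i <;> fin_cases j <;>
    simp [Q, J₂, kron2, mul_apply, Fin.sum_univ_four, conjTranspose_apply, Complex.ext_iff,
      div_mul_div_comm, finProdFinEquiv, Fin.divNat, Fin.modNat] <;>
    norm_num [Real.sq_sqrt]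

lemma bellB_mul (A B : Matrix (Fin 4) (Fin 4) ℂ) : bellB (A * B) = bellB A * bellB B := by
  simp only [bellB, Matrix.mul_assoc]
  rw [← Matrix.mul_assoc Q, Q_mul_Q_conjTranspose, Matrix.one_mul]

lemma bellB_kron2_transpose_mul_self {u v : Matrix (Fin 2) (Fin 2) ℂ} (hu : u.det = 1)
    (hv : v.det = 1) : (bellB (kron2 u v))ᵀ * bellB (kron2 u v) = 1 := by
  calc (bellB (kron2 u v))ᵀ * bellB (kron2 u v)
      = Qᵀ * ((kron2 u v)ᵀ * (Qᴴᵀ * Qᴴ) * kron2 u v) * Q := by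
        simp only [bellB, transpose_mul, Matrix.mul_assoc]
    _ = (Qᴴ * Q)ᵀ * (Qᴴ * Q) := by
        rw [transpose_conjTranspose_Q_mul_conjTranspose_Q,
          transpose_kron2_mul_kron2_J₂_mul hu hv,
          ← transpose_conjTranspose_Q_mul_conjTranspose_Q]
        simp only [transpose_mul, Matrix.mul_assoc]
    _ = 1 := by rw [Q_conjTranspose_mul_Q, transpose_one, Matrix.one_mul]

lemma bellB_transpose_mul_self_local_equiv {u₁ u₂ v₁ v₂ : Matrix (Fin 2) (Fin 2) ℂ}
    (hu₁ : u₁.det = 1) (hu₂ : u₂.det = 1) (M : Matrix (Fin 4) (Fin 4) ℂ) :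
    (bellB (kron2 u₁ u₂ * M * kron2 v₁ v₂))ᵀ * bellB (kron2 u₁ u₂ * M * kron2 v₁ v₂) =
      (bellB (kron2 v₁ v₂))ᵀ * ((bellB M)ᵀ * bellB M) * bellB (kron2 v₁ v₂) := by
  have hP := bellB_kron2_transpose_mul_self hu₁ hu₂
  simp only [bellB_mul, transpose_mul, Matrix.mul_assoc]
  rw [← Matrix.mul_assoc (bellB (kron2 u₁ u₂))ᵀ, hP, Matrix.one_mul]

theorem makhlin_invariants_local_equivalence_general
    (M : Matrix (Fin 4) (Fin 4) ℂ)
    (u₁ u₂ v₁ v₂ : Matrix (Fin 2) (Fin 2) ℂ)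
    (hdu₁ : u₁.det = 1)
    (hdu₂ : u₂.det = 1)
    (hdv₁ : v₁.det = 1)
    (hdv₂ : v₂.det = 1)
    (L : Matrix (Fin 4) (Fin 4) ℂ) (hL : L = kron2 u₁ u₂ * M * kron2 v₁ v₂) :
    makhlin₁ L = makhlin₁ M ∧ makhlin₂ L = makhlin₂ M ∧
      ((bellB L)ᵀ * bellB L).charpoly = ((bellB M)ᵀ * bellB M).charpoly := by
  have hO := bellB_kron2_transpose_mul_self hdv₁ hdv₂
  have hgram := bellB_transpose_mul_self_local_equiv (v₁ := v₁) (v₂ := v₂) hdu₁ hdu₂ M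
  rw [← hL] at hgram
  have hdet : Lᴴ.det = Mᴴ.det := by
    rw [det_conjTranspose, det_conjTranspose, hL, det_mul, det_mul, det_kron2, det_kron2, hdu₁,
      hdu₂, hdv₁, hdv₂]
    simp only [one_pow, one_mul, mul_one]
  refine ⟨?_, ?_, ?_⟩
  · rw [makhlin₁, makhlin₁, hgram, trace_transpose_conj hO, hdet]
  · rw [makhlin₂, makhlin₂, hgram, transpose_conj_pow hO, trace_transpose_conj hO,
      trace_transpose_conj hO, hdet]
  · rw [hgram, charpoly_transpose_conj hO]

/-- locally equivalent two-qubit gates have identical Makhlin invariants,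
and `L_Bᵀ L_B` and `M_Bᵀ M_B` have the same characteristic polynomial (hence spectrum). -/
theorem makhlin_invariants_local_equivalence
    (M : Matrix (Fin 4) (Fin 4) ℂ) (hM : M ∈ Matrix.unitaryGroup (Fin 4) ℂ)
    (u₁ u₂ v₁ v₂ : Matrix (Fin 2) (Fin 2) ℂ)
    (hu₁ : u₁ ∈ Matrix.unitaryGroup (Fin 2) ℂ) (hdu₁ : u₁.det = 1)
    (hu₂ : u₂ ∈ Matrix.unitaryGroup (Fin 2) ℂ) (hdu₂ : u₂.det = 1)
    (hv₁ : v₁ ∈ Matrix.unitaryGroup (Fin 2) ℂ) (hdv₁ : v₁.det = 1)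
    (hv₂ : v₂ ∈ Matrix.unitaryGroup (Fin 2) ℂ) (hdv₂ : v₂.det = 1)
    (L : Matrix (Fin 4) (Fin 4) ℂ) (hL : L = kron2 u₁ u₂ * M * kron2 v₁ v₂) :
    makhlin₁ L = makhlin₁ M ∧ makhlin₂ L = makhlin₂ M ∧
      ((bellB L)ᵀ * bellB L).charpoly = ((bellB M)ᵀ * bellB M).charpoly :=
  makhlin_invariants_local_equivalence_general M u₁ u₂ v₁ v₂ hdu₁ hdu₂ hdv₁ hdv₂ L hL
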